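/- Let $X=\{(x_j,y_k):j,k\in\mathbb{J}\}$ be a $\gamma$-dense set in $\mathbb{R}^{d+1}$ with bounded uniform partition of unity $\{\beta_{j,k}\}$, and let $\phi\in W_0(L^{1,1})$ be continuous with compact support. Then there exist constants $C>0$ and $\gamma_0>0$ such that for every $\gamma\le\gamma_0$, every $1\le p,q<\infty$, and every $c\in\ell^{p,q}(\mathbb{Z}^{d+1})$, the quasi-interpolant $Q_X f=\sum_{j,k}f(x_j,y_k)\beta_{j,k}$ of $f=\sum_{k\in\mathbb{Z}^{d+1}}c_k\phi(\cdot-k)$ satisfies $\|Q_X f\|_{L^{p,q}}\le C\|c\|_{\ell^{p,q}}\|\phi\|_{W(L^{1,1})}$. -/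

import Mathlib

open MeasureTheory ENNReal Filter Topology

noncomputable section

/-- The domain `ℝ × ℝ^d`. -/
abbrev Dom (d : ℕ) := ℝ × (Fin d → ℝ)

/-- The mixed Wiener amalgam norm `‖g‖_{W(L^{1,1})}`. -/
def WNorm (d : ℕ) {E : Type*} [SeminormedAddGroup E] (g : Dom d → E) : ℝ≥0∞ :=
  ∑' n : ℤ, ⨆ x ∈ Set.Icc (0:ℝ) 1,
    ∑' l : Fin d → ℤ, ⨆ y ∈ Set.Icc (0 : Fin d → ℝ) 1,
      (‖g (x + (n : ℝ), y + (fun i => (l i : ℝ)))‖₊ : ℝ≥0∞)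

/-- The mixed Lebesgue norm `‖f‖_{L^{p,q}}`. -/
def LpqNorm (d : ℕ) (p q : ℝ) {E : Type*} [SeminormedAddGroup E] (f : Dom d → E) : ℝ≥0∞ :=
  (∫⁻ x : ℝ, ((∫⁻ y : Fin d → ℝ, (‖f (x, y)‖₊ : ℝ≥0∞) ^ q) ^ (p / q))) ^ (1 / p)

/-- The mixed sequence norm `‖c‖_{ℓ^{p,q}}`. -/
def lpqNorm (d : ℕ) (p q : ℝ) {E : Type*} [SeminormedAddGroup E]
    (c : ℤ × (Fin d → ℤ) → E) : ℝ≥0∞ :=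
  (∑' k1 : ℤ, (∑' k2 : Fin d → ℤ, (‖c (k1, k2)‖₊ : ℝ≥0∞) ^ q) ^ (p / q)) ^ (1 / p)

/-- Convolution on `ℝ^{d+1}`. -/
def conv (d : ℕ) (f g : Dom d → ℂ) (x : Dom d) : ℂ :=
  ∫ y : Dom d, f y * g (x - y)

/-- The oscillation (modulus of continuity) of `φ` at scale `δ`. -/
def osc (d : ℕ) {E : Type*} [SeminormedAddGroup E] (δ : ℝ) (φ : Dom d → E) (x : Dom d) : ℝ :=
  ⨆ y : {y : Dom d // |y.1| ≤ δ ∧ Real.sqrt (∑ i, y.2 i ^ 2) ≤ δ},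
    ‖φ (x + (y : Dom d)) - φ x‖

/-- The dilation `ψ_a = a^{-(d+1)} ψ(·/a)`. -/
def scaleA (d : ℕ) (a : ℝ) (ψ : Dom d → ℂ) (x : Dom d) : ℂ :=
  (a ^ (d + 1) : ℝ)⁻¹ • ψ (x.1 / a, fun i => x.2 i / a)

/-- The involution `ψ^*(x) = conj (ψ(-x))`. -/
def starFn (d : ℕ) (ψ : Dom d → ℂ) (x : Dom d) : ℂ := starRingEnd ℂ (ψ (-x))

/-- The quasi-interpolant `Q_X f = ∑_{j,k} f(x_j,y_k) β_{j,k}`. -/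
def QX {d : ℕ} {J : Type*} (xs : J → ℝ) (ys : J → Fin d → ℝ)
    (β : J → J → Dom d → ℝ) (f : Dom d → ℂ) (z : Dom d) : ℂ :=
  ∑' jk : J × J, β jk.1 jk.2 z • f (xs jk.1, ys jk.2)

/-- A bounded uniform partition of unity associated to the balls `B_γ(x_j,y_k)`. -/
def IsBUPU {d : ℕ} {J : Type*} (xs : J → ℝ) (ys : J → Fin d → ℝ) (γ : ℝ)
    (β : J → J → Dom d → ℝ) : Prop :=
  (∀ j k z, 0 ≤ β j k z ∧ β j k z ≤ 1) ∧
  (∀ j k, Function.support (β j k) ⊆ Metric.ball ((xs j, ys k) : Dom d) γ) ∧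
  (∀ z, ∑' jk : J × J, β jk.1 jk.2 z = 1)

/-- `X = {(x_j,y_k)}` is `γ₀`-dense in `ℝ^{d+1}`. -/
def IsGammaDense {d : ℕ} {J : Type*} (xs : J → ℝ) (ys : J → Fin d → ℝ) (γ₀ : ℝ) : Prop :=
  ∀ γ > γ₀, ∀ z : Dom d, ∃ j k : J, z ∈ Metric.ball ((xs j, ys k) : Dom d) γ

/-- The function generated by coefficients `c` and generator `φ`. -/
def genFun {d : ℕ} (φ : Dom d → ℂ) (c : ℤ × (Fin d → ℤ) → ℂ) (z : Dom d) : ℂ :=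
  ∑' k : ℤ × (Fin d → ℤ), c k • φ (z.1 - (k.1 : ℝ), z.2 - (fun i => (k.2 i : ℝ)))

/-- The function generated by several generators. -/
def genFunM {d r : ℕ} (φ : Fin r → Dom d → ℂ) (c : Fin r → ℤ × (Fin d → ℤ) → ℂ)
    (z : Dom d) : ℂ :=
  ∑ i, genFun (φ i) (c i) z

/-- Membership in the multiply generated shift-invariant space `V_{p,q}(Φ)`. -/
def MemV {d r : ℕ} (p q : ℝ) (φ : Fin r → Dom d → ℂ) (f : Dom d → ℂ) : Prop :=
  ∃ c : Fin r → ℤ × (Fin d → ℤ) → ℂ, (∀ i, lpqNorm d p q (c i) < ⊤) ∧ f = genFunM φ c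


lemma aux_sum_rpow {ι : Type*} (S : Finset ι) (b : ι → ℝ≥0∞) {t : ℝ} (ht : 0 < t) :
    (∑ s ∈ S, b s) ^ t ≤ (S.card : ℝ≥0∞) ^ t * ∑ s ∈ S, b s ^ t := by
  rcases S.eq_empty_or_nonempty with h | h
  · simp [h, ENNReal.zero_rpow_of_pos ht]
  · obtain ⟨s₀, hs₀, hsup⟩ := S.exists_mem_eq_sup h b
    calc (∑ s ∈ S, b s) ^ t ≤ ((S.card : ℝ≥0∞) * b s₀) ^ t := by
          apply ENNReal.rpow_le_rpow _ ht.le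
          rw [← hsup]
          simpa [nsmul_eq_mul] using
            Finset.sum_le_card_nsmul S b (S.sup b) (fun s hs => Finset.le_sup hs)
      _ = (S.card : ℝ≥0∞) ^ t * (b s₀) ^ t := ENNReal.mul_rpow_of_nonneg _ _ ht.le
      _ ≤ _ := by
          refine mul_le_mul_right ?_ _
          exact Finset.single_le_sum (f := fun s => b s ^ t) (fun _ _ => bot_le) hs₀

lemma aux_ennnorm_tsum_le {ι : Type*} (g : ι → ℂ) :
    (‖∑' i, g i‖₊ : ℝ≥0∞) ≤ ∑' i, (‖g i‖₊ : ℝ≥0∞) := by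
  by_cases h : ∑' i, (‖g i‖₊ : ℝ≥0∞) = ⊤
  · simp [h]
  · have hs : Summable fun i => ‖g i‖₊ := ENNReal.tsum_coe_ne_top_iff_summable.mp h
    rw [← ENNReal.coe_tsum hs]
    exact ENNReal.coe_le_coe.mpr (nnnorm_tsum_le hs)

lemma aux_lintegral_floor (u : ℤ → ℝ≥0∞) : ∫⁻ x : ℝ, u ⌊x⌋ = ∑' n : ℤ, u n := by
  have hm : ∀ n : ℤ, MeasurableSet (Int.floor ⁻¹' {n} : Set ℝ) := fun n =>
    Int.measurable_floor (measurableSet_singleton n)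
  have h1 : (⋃ n : ℤ, (Int.floor ⁻¹' {n} : Set ℝ)) = Set.univ := by
    ext x; simp only [Set.mem_iUnion, Set.mem_preimage, Set.mem_singleton_iff, Set.mem_univ,
      iff_true]
    exact ⟨⌊x⌋, rfl⟩
  have hd : Pairwise (Function.onFun Disjoint fun n : ℤ => (Int.floor ⁻¹' {n} : Set ℝ)) := by
    intro m n hmn
    simp only [Function.onFun, Set.disjoint_left, Set.mem_preimage, Set.mem_singleton_iff]
    intro x hxm hxn
    exact hmn (hxm ▸ hxn)
  calc ∫⁻ x : ℝ, u ⌊x⌋ = ∫⁻ x in ⋃ n : ℤ, (Int.floor ⁻¹' {n} : Set ℝ), u ⌊x⌋ := by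
        rw [h1, Measure.restrict_univ]
    _ = ∑' n : ℤ, ∫⁻ x in (Int.floor ⁻¹' {n} : Set ℝ), u ⌊x⌋ := lintegral_iUnion hm hd _
    _ = ∑' n : ℤ, u n := by
        refine tsum_congr fun n => ?_
        rw [setLIntegral_congr_fun (hm n) (fun x hx => by
          simp only [Set.mem_preimage, Set.mem_singleton_iff] at hx; rw [hx]),
          setLIntegral_const]
        have hico : (Int.floor ⁻¹' {n} : Set ℝ) = Set.Ico (n : ℝ) (n + 1) := by
          ext x
          simp [Set.mem_preimage, Int.floor_eq_iff, Set.mem_Ico]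
        rw [hico, Real.volume_Ico]
        simp

lemma aux_floor_pi_measurable (d : ℕ) : Measurable (fun y : Fin d → ℝ => fun i => ⌊y i⌋) :=
  measurable_pi_lambda _ fun i => Int.measurable_floor.comp (measurable_pi_apply i)

lemma aux_lintegral_floor_pi (d : ℕ) (v : (Fin d → ℤ) → ℝ≥0∞) :
    ∫⁻ y : Fin d → ℝ, v (fun i => ⌊y i⌋) = ∑' l : Fin d → ℤ, v l := by
  have hFm : Measurable (fun y : Fin d → ℝ => fun i => ⌊y i⌋) := aux_floor_pi_measurable d
  have hm : ∀ l : Fin d → ℤ,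
      MeasurableSet ((fun y : Fin d → ℝ => fun i => ⌊y i⌋) ⁻¹' {l}) := fun l =>
    hFm (measurableSet_singleton l)
  have h1 : (⋃ l : Fin d → ℤ, (fun y : Fin d → ℝ => fun i => ⌊y i⌋) ⁻¹' {l}) = Set.univ := by
    ext y; simp
  have hd2 : Pairwise (Function.onFun Disjoint fun l : Fin d → ℤ =>
      (fun y : Fin d → ℝ => fun i => ⌊y i⌋) ⁻¹' {l}) := by
    intro m n hmn
    simp only [Function.onFun, Set.disjoint_left, Set.mem_preimage, Set.mem_singleton_iff]
    intro x hxm hxn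
    exact hmn (hxm ▸ hxn)
  have hvol : ∀ l : Fin d → ℤ,
      volume ((fun y : Fin d → ℝ => fun i => ⌊y i⌋) ⁻¹' {l}) = 1 := by
    intro l
    have heq : ((fun y : Fin d → ℝ => fun i => ⌊y i⌋) ⁻¹' {l})
        = Set.univ.pi fun i => Set.Ico ((l i : ℝ)) (l i + 1) := by
      ext y
      simp only [Set.mem_preimage, Set.mem_singleton_iff, Set.mem_pi, Set.mem_univ,
        true_implies, funext_iff, Set.mem_Ico]
      exact forall_congr' fun i => Int.floor_eq_iff
    rw [heq, volume_pi_pi]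
    simp
  calc ∫⁻ y : Fin d → ℝ, v (fun i => ⌊y i⌋)
      = ∫⁻ y in ⋃ l : Fin d → ℤ, (fun y : Fin d → ℝ => fun i => ⌊y i⌋) ⁻¹' {l},
          v (fun i => ⌊y i⌋) := by rw [h1, Measure.restrict_univ]
    _ = ∑' l : Fin d → ℤ, ∫⁻ y in (fun y : Fin d → ℝ => fun i => ⌊y i⌋) ⁻¹' {l},
          v (fun i => ⌊y i⌋) := lintegral_iUnion hm hd2 _
    _ = ∑' l : Fin d → ℤ, v l := by
        refine tsum_congr fun l => ?_
        rw [setLIntegral_congr_fun (hm l) (fun y hy => by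
          simp only [Set.mem_preimage, Set.mem_singleton_iff] at hy; rw [hy]),
          setLIntegral_const, hvol, mul_one]

lemma aux_window {R t s : ℝ} {n m : ℤ} (hn : n = ⌊t⌋)
    (h1 : |s - ((n + m : ℤ) : ℝ)| ≤ R) (h2 : |s - t| < 1) :
    m ∈ Finset.Icc (-(⌈R⌉+2)) (⌈R⌉+2) := by
  subst hn
  have hf1 : ((⌊t⌋ : ℤ) : ℝ) ≤ t := Int.floor_le t
  have hf2 : t < (⌊t⌋ : ℝ) + 1 := Int.lt_floor_add_one t
  have hc : R ≤ (⌈R⌉ : ℝ) := Int.le_ceil R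
  push_cast at h1
  rw [abs_le] at h1
  rw [abs_lt] at h2
  rw [Finset.mem_Icc]
  constructor
  · have : (-((⌈R⌉ : ℝ) + 2)) ≤ (m : ℝ) := by linarith [h1.2, h2.1]
    exact_mod_cast this
  · have : (m : ℝ) ≤ (⌈R⌉ : ℝ) + 2 := by linarith [h1.1, h2.2]
    exact_mod_cast this

def auxM (R : ℝ) : Finset ℤ := Finset.Icc (-(⌈R⌉+2)) (⌈R⌉+2)

def auxM2 (d : ℕ) (R : ℝ) : Finset (Fin d → ℤ) := Fintype.piFinset fun _ => auxM R

def auxKB (d : ℕ) (R A₀ : ℝ) : ℝ≥0∞ :=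
  ENNReal.ofReal A₀ * ((auxM R ×ˢ auxM2 d R).card : ℝ≥0∞) * ((auxM2 d R).card : ℝ≥0∞) *
    ((auxM R).card : ℝ≥0∞) * ((auxM R).card : ℝ≥0∞)

lemma auxM_zero_mem (R : ℝ) (hR : 0 ≤ R) : (0:ℤ) ∈ auxM R := by
  have h2 : (0:ℤ) ≤ ⌈R⌉ + 2 := by have := Int.ceil_nonneg hR; omega
  simp only [auxM, Finset.mem_Icc]
  omega

lemma auxM_nonempty (R : ℝ) (hR : 0 ≤ R) : (auxM R).Nonempty := ⟨0, auxM_zero_mem R hR⟩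

lemma auxKB_ne_top (d : ℕ) (R A₀ : ℝ) : auxKB d R A₀ ≠ ⊤ := by
  simp only [auxKB]
  exact ENNReal.mul_ne_top (ENNReal.mul_ne_top (ENNReal.mul_ne_top
    (ENNReal.mul_ne_top ENNReal.ofReal_ne_top (ENNReal.natCast_ne_top _))
    (ENNReal.natCast_ne_top _)) (ENNReal.natCast_ne_top _)) (ENNReal.natCast_ne_top _)

lemma key_bound (d : ℕ) (φ : Dom d → ℂ) (R A₀ : ℝ) (hR0 : 0 ≤ R)
    (hsupp : ∀ u : Dom d, φ u ≠ 0 → |u.1| ≤ R ∧ ∀ i, |u.2 i| ≤ R)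
    (hA : ∀ u, ‖φ u‖ ≤ A₀)
    (γ : ℝ) (hγ1 : γ ≤ 1)
    (J : Type) [Countable J] (xs : J → ℝ) (ys : J → Fin d → ℝ)
    (β : J → J → Dom d → ℝ) (hβ : IsBUPU xs ys γ β)
    (p q : ℝ) (hp : 1 ≤ p) (hq : 1 ≤ q)
    (c : ℤ × (Fin d → ℤ) → ℂ) :
    LpqNorm d p q (QX xs ys β (genFun φ c)) ≤ auxKB d R A₀ * lpqNorm d p q c := by
  obtain ⟨hβ01, hβs, hβ1⟩ := hβ
  have hq0 : (0:ℝ) < q := lt_of_lt_of_le one_pos hq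
  have hp0 : (0:ℝ) < p := lt_of_lt_of_le one_pos hp
  have hpq : (0:ℝ) < p / q := div_pos hp0 hq0
  set A : ℝ≥0∞ := ENNReal.ofReal A₀ with hAdef
  set S : Finset (ℤ × (Fin d → ℤ)) := auxM R ×ˢ auxM2 d R with hSdef
  -- pointwise bound on the generated function over a ball
  have hfb : ∀ z w : Dom d, dist w z < γ → (‖genFun φ c w‖₊ : ℝ≥0∞) ≤
      A * ∑ m ∈ S, (‖c (((⌊z.1⌋, fun i => ⌊z.2 i⌋) : ℤ × (Fin d → ℤ)) + m)‖₊ : ℝ≥0∞) := by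
    intro z w hw
    set zk : ℤ × (Fin d → ℤ) := (⌊z.1⌋, fun i => ⌊z.2 i⌋) with hzk
    have hd1 : |w.1 - z.1| < 1 := by
      have h' : dist w.1 z.1 ≤ dist w z := by rw [Prod.dist_eq]; exact le_sup_left
      rw [Real.dist_eq] at h'
      linarith
    have hd2 : ∀ i, |w.2 i - z.2 i| < 1 := by
      intro i
      have h2' : dist w.2 z.2 ≤ dist w z := by rw [Prod.dist_eq]; exact le_sup_right
      have h'' := (dist_le_pi_dist w.2 z.2 i).trans h2'
      rw [Real.dist_eq] at h''
      linarith
    have h1 : (‖genFun φ c w‖₊ : ℝ≥0∞) ≤ ∑' k : ℤ × (Fin d → ℤ),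
        (‖c k‖₊ : ℝ≥0∞) * (‖φ (w.1 - (k.1:ℝ), w.2 - fun i => (k.2 i:ℝ))‖₊ : ℝ≥0∞) := by
      refine (aux_ennnorm_tsum_le _).trans_eq (tsum_congr fun k => ?_)
      rw [nnnorm_smul, ENNReal.coe_mul]
    have hre := Equiv.tsum_eq (Equiv.addLeft zk)
      (fun k : ℤ × (Fin d → ℤ) =>
        (‖c k‖₊ : ℝ≥0∞) * (‖φ (w.1 - (k.1:ℝ), w.2 - fun i => (k.2 i:ℝ))‖₊ : ℝ≥0∞))
    rw [← hre] at h1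
    simp only [Equiv.coe_addLeft] at h1
    refine h1.trans ?_
    have h2 : ∀ m : ℤ × (Fin d → ℤ),
        (‖c (zk + m)‖₊ : ℝ≥0∞) *
          (‖φ (w.1 - ((zk + m).1:ℝ), w.2 - fun i => ((zk + m).2 i:ℝ))‖₊ : ℝ≥0∞)
          ≤ if m ∈ S then A * (‖c (zk + m)‖₊ : ℝ≥0∞) else 0 := by
      intro m
      by_cases h0 : φ (w.1 - ((zk + m).1:ℝ), w.2 - fun i => ((zk + m).2 i:ℝ)) = 0
      · simp only [h0, nnnorm_zero, ENNReal.coe_zero, mul_zero]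
        exact bot_le
      · obtain ⟨ha1, ha2⟩ := hsupp _ h0
        have hm1 : m.1 ∈ auxM R := aux_window rfl ha1 hd1
        have hm2 : m.2 ∈ auxM2 d R :=
          Fintype.mem_piFinset.mpr fun i => aux_window rfl (ha2 i) (hd2 i)
        rw [if_pos (Finset.mem_product.mpr ⟨hm1, hm2⟩), mul_comm]
        refine mul_le_mul_left ?_ _
        rw [← enorm_eq_nnnorm, ← ofReal_norm]
        exact ENNReal.ofReal_le_ofReal (hA _)
    refine (Summable.tsum_le_tsum h2 ENNReal.summable ENNReal.summable).trans_eq ?_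
    rw [tsum_eq_sum (s := S) (fun m hm => if_neg hm)]
    calc ∑ m ∈ S, (if m ∈ S then A * (‖c (zk + m)‖₊ : ℝ≥0∞) else 0)
        = ∑ m ∈ S, A * (‖c (zk + m)‖₊ : ℝ≥0∞) :=
          Finset.sum_congr rfl fun m hm => if_pos hm
      _ = A * ∑ m ∈ S, (‖c (zk + m)‖₊ : ℝ≥0∞) := by rw [Finset.mul_sum]
  -- pointwise bound on the quasi-interpolant
  have hpt : ∀ z : Dom d, (‖QX xs ys β (genFun φ c) z‖₊ : ℝ≥0∞) ≤
      A * ∑ m ∈ S, (‖c (((⌊z.1⌋, fun i => ⌊z.2 i⌋) : ℤ × (Fin d → ℤ)) + m)‖₊ : ℝ≥0∞) := by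
    intro z
    have hsum : Summable fun jk : J × J => β jk.1 jk.2 z := by
      by_contra h
      exact one_ne_zero ((hβ1 z).symm.trans (tsum_eq_zero_of_not_summable h))
    calc (‖QX xs ys β (genFun φ c) z‖₊ : ℝ≥0∞)
        ≤ ∑' jk : J × J, (‖β jk.1 jk.2 z • genFun φ c (xs jk.1, ys jk.2)‖₊ : ℝ≥0∞) :=
          aux_ennnorm_tsum_le _
      _ ≤ ∑' jk : J × J, ENNReal.ofReal (β jk.1 jk.2 z) *
            (A * ∑ m ∈ S, (‖c (((⌊z.1⌋, fun i => ⌊z.2 i⌋) : ℤ × (Fin d → ℤ)) + m)‖₊ : ℝ≥0∞)) := by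
          refine Summable.tsum_le_tsum (fun jk => ?_) ENNReal.summable ENNReal.summable
          rw [nnnorm_smul, ENNReal.coe_mul, ← enorm_eq_nnnorm (β jk.1 jk.2 z), Real.enorm_eq_ofReal (hβ01 jk.1 jk.2 z).1]
          by_cases h0 : β jk.1 jk.2 z = 0
          · simp [h0]
          · refine mul_le_mul_right ?_ _
            have hz : z ∈ Metric.ball ((xs jk.1, ys jk.2) : Dom d) γ :=
              hβs jk.1 jk.2 (by simpa [Function.mem_support] using h0)
            exact hfb z (xs jk.1, ys jk.2) (by rw [dist_comm]; exact Metric.mem_ball.mp hz)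
      _ = (∑' jk : J × J, ENNReal.ofReal (β jk.1 jk.2 z)) *
            (A * ∑ m ∈ S, (‖c (((⌊z.1⌋, fun i => ⌊z.2 i⌋) : ℤ × (Fin d → ℤ)) + m)‖₊ : ℝ≥0∞)) :=
          ENNReal.tsum_mul_right
      _ = A * ∑ m ∈ S, (‖c (((⌊z.1⌋, fun i => ⌊z.2 i⌋) : ℤ × (Fin d → ℤ)) + m)‖₊ : ℝ≥0∞) := by
          rw [← ENNReal.ofReal_tsum_of_nonneg (f := fun jk : J × J => β jk.1 jk.2 z) (fun jk => (hβ01 jk.1 jk.2 z).1) hsum, hβ1 z,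
            ENNReal.ofReal_one, one_mul]
  -- abbreviations
  set a : ℤ × (Fin d → ℤ) → ℝ≥0∞ := fun k => (‖c k‖₊ : ℝ≥0∞) with hadef
  set T : ℤ → ℝ≥0∞ := fun n => ∑' l : Fin d → ℤ, a (n, l) ^ q with hTdef
  set Sp : ℝ≥0∞ := ∑' n : ℤ, T n ^ (p / q) with hSpdef
  set D0 : ℝ≥0∞ := A ^ q * ((S.card : ℝ≥0∞)) ^ q with hD0def
  have hD0top : D0 ≠ ⊤ := ENNReal.mul_ne_top
    (ENNReal.rpow_ne_top_of_nonneg hq0.le ENNReal.ofReal_ne_top)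
    (ENNReal.rpow_ne_top_of_nonneg hq0.le (ENNReal.natCast_ne_top _))
  have hb2 : ∀ x : ℝ, (∫⁻ y : Fin d → ℝ, (‖QX xs ys β (genFun φ c) (x, y)‖₊ : ℝ≥0∞) ^ q)
      ≤ D0 * (((auxM2 d R).card : ℝ≥0∞) * ∑ m1 ∈ auxM R, T (⌊x⌋ + m1)) := by
    intro x
    have step1 : ∀ y : Fin d → ℝ, (‖QX xs ys β (genFun φ c) (x, y)‖₊ : ℝ≥0∞) ^ q ≤
        D0 * ∑ m ∈ S, a (((⌊x⌋, fun i => ⌊y i⌋) : ℤ × (Fin d → ℤ)) + m) ^ q := by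
      intro y
      calc (‖QX xs ys β (genFun φ c) (x, y)‖₊ : ℝ≥0∞) ^ q
          ≤ (A * ∑ m ∈ S, a (((⌊x⌋, fun i => ⌊y i⌋) : ℤ × (Fin d → ℤ)) + m)) ^ q :=
            ENNReal.rpow_le_rpow (hpt (x, y)) hq0.le
        _ = A ^ q * (∑ m ∈ S, a (((⌊x⌋, fun i => ⌊y i⌋) : ℤ × (Fin d → ℤ)) + m)) ^ q :=
            ENNReal.mul_rpow_of_nonneg _ _ hq0.le
        _ ≤ A ^ q * (((S.card : ℝ≥0∞)) ^ q *
              ∑ m ∈ S, a (((⌊x⌋, fun i => ⌊y i⌋) : ℤ × (Fin d → ℤ)) + m) ^ q) :=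
            mul_le_mul_right (aux_sum_rpow S _ hq0) _
        _ = D0 * ∑ m ∈ S, a (((⌊x⌋, fun i => ⌊y i⌋) : ℤ × (Fin d → ℤ)) + m) ^ q := by
            rw [hD0def]; ring
    have hmeas : ∀ m : ℤ × (Fin d → ℤ), Measurable (fun y : Fin d → ℝ =>
        a (((⌊x⌋, fun i => ⌊y i⌋) : ℤ × (Fin d → ℤ)) + m) ^ q) := by
      intro m
      exact Measurable.comp
        (g := fun l : Fin d → ℤ => a (((⌊x⌋, l) : ℤ × (Fin d → ℤ)) + m) ^ q)
        (f := fun y : Fin d → ℝ => fun i => ⌊y i⌋)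
        (measurable_of_countable _) (aux_floor_pi_measurable d)
    calc (∫⁻ y : Fin d → ℝ, (‖QX xs ys β (genFun φ c) (x, y)‖₊ : ℝ≥0∞) ^ q)
        ≤ ∫⁻ y : Fin d → ℝ, D0 * ∑ m ∈ S,
            a (((⌊x⌋, fun i => ⌊y i⌋) : ℤ × (Fin d → ℤ)) + m) ^ q := lintegral_mono step1
      _ = D0 * ∑ m ∈ S, ∫⁻ y : Fin d → ℝ,
            a (((⌊x⌋, fun i => ⌊y i⌋) : ℤ × (Fin d → ℤ)) + m) ^ q := by
          rw [lintegral_const_mul' _ _ hD0top,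
            lintegral_finset_sum' S (fun m _ => (hmeas m).aemeasurable)]
      _ = D0 * ∑ m ∈ S, T (⌊x⌋ + m.1) := by
          congr 1
          refine Finset.sum_congr rfl fun m _ => ?_
          have hree := Equiv.tsum_eq (Equiv.addRight m.2)
            (fun l : Fin d → ℤ => a (⌊x⌋ + m.1, l) ^ q)
          simp only [Equiv.coe_addRight] at hree
          exact (aux_lintegral_floor_pi d
            (fun l : Fin d → ℤ => a (((⌊x⌋, l) : ℤ × (Fin d → ℤ)) + m) ^ q)).trans hree
      _ = D0 * (((auxM2 d R).card : ℝ≥0∞) * ∑ m1 ∈ auxM R, T (⌊x⌋ + m1)) := by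
          rw [hSdef, Finset.sum_product]
          simp only [Finset.sum_const, nsmul_eq_mul]
          rw [← Finset.mul_sum]
  set D1 : ℝ≥0∞ := (D0 * ((auxM2 d R).card : ℝ≥0∞)) ^ (p/q) * ((auxM R).card : ℝ≥0∞) ^ (p/q)
    with hD1def
  have hD1top : D1 ≠ ⊤ := ENNReal.mul_ne_top
    (ENNReal.rpow_ne_top_of_nonneg hpq.le
      (ENNReal.mul_ne_top hD0top (ENNReal.natCast_ne_top _)))
    (ENNReal.rpow_ne_top_of_nonneg hpq.le (ENNReal.natCast_ne_top _))
  have hb4 : (∫⁻ x : ℝ, (∫⁻ y : Fin d → ℝ,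
        (‖QX xs ys β (genFun φ c) (x, y)‖₊ : ℝ≥0∞) ^ q) ^ (p/q))
      ≤ D1 * (((auxM R).card : ℝ≥0∞) * Sp) := by
    have step : ∀ x : ℝ, (∫⁻ y : Fin d → ℝ,
        (‖QX xs ys β (genFun φ c) (x, y)‖₊ : ℝ≥0∞) ^ q) ^ (p/q)
        ≤ D1 * ∑ m1 ∈ auxM R, T (⌊x⌋ + m1) ^ (p/q) := by
      intro x
      calc (∫⁻ y : Fin d → ℝ, (‖QX xs ys β (genFun φ c) (x, y)‖₊ : ℝ≥0∞) ^ q) ^ (p/q)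
          ≤ (D0 * (((auxM2 d R).card : ℝ≥0∞) * ∑ m1 ∈ auxM R, T (⌊x⌋ + m1))) ^ (p/q) :=
            ENNReal.rpow_le_rpow (hb2 x) hpq.le
        _ = (D0 * ((auxM2 d R).card : ℝ≥0∞)) ^ (p/q) *
              (∑ m1 ∈ auxM R, T (⌊x⌋ + m1)) ^ (p/q) := by
            rw [← mul_assoc, ENNReal.mul_rpow_of_nonneg _ _ hpq.le]
        _ ≤ (D0 * ((auxM2 d R).card : ℝ≥0∞)) ^ (p/q) *
              (((auxM R).card : ℝ≥0∞) ^ (p/q) * ∑ m1 ∈ auxM R, T (⌊x⌋ + m1) ^ (p/q)) :=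
            mul_le_mul_right (aux_sum_rpow _ _ hpq) _
        _ = D1 * ∑ m1 ∈ auxM R, T (⌊x⌋ + m1) ^ (p/q) := by
            rw [hD1def]; ring
    have hmeas2 : ∀ m1 : ℤ, Measurable (fun x : ℝ => T (⌊x⌋ + m1) ^ (p/q)) := by
      intro m1
      exact Measurable.comp (g := fun n : ℤ => T (n + m1) ^ (p/q)) (f := fun x : ℝ => ⌊x⌋)
        (measurable_of_countable _) Int.measurable_floor
    calc (∫⁻ x : ℝ, (∫⁻ y : Fin d → ℝ,
            (‖QX xs ys β (genFun φ c) (x, y)‖₊ : ℝ≥0∞) ^ q) ^ (p/q))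
        ≤ ∫⁻ x : ℝ, D1 * ∑ m1 ∈ auxM R, T (⌊x⌋ + m1) ^ (p/q) := lintegral_mono step
      _ = D1 * ∑ m1 ∈ auxM R, ∫⁻ x : ℝ, T (⌊x⌋ + m1) ^ (p/q) := by
          rw [lintegral_const_mul' _ _ hD1top,
            lintegral_finset_sum' _ (fun m1 _ => (hmeas2 m1).aemeasurable)]
      _ = D1 * ∑ m1 ∈ auxM R, Sp := by
          congr 1
          refine Finset.sum_congr rfl fun m1 _ => ?_
          have hree := Equiv.tsum_eq (Equiv.addRight m1) (fun n : ℤ => T n ^ (p/q))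
          simp only [Equiv.coe_addRight] at hree
          rw [hSpdef]
          exact (aux_lintegral_floor (fun n : ℤ => T (n + m1) ^ (p/q))).trans hree
      _ = D1 * (((auxM R).card : ℝ≥0∞) * Sp) := by
          simp [Finset.sum_const, nsmul_eq_mul]
  -- conclude
  have hfinal : LpqNorm d p q (QX xs ys β (genFun φ c)) ≤
      (D1 * (((auxM R).card : ℝ≥0∞) * Sp)) ^ (1/p) := by
    rw [LpqNorm]
    exact ENNReal.rpow_le_rpow hb4 (by positivity)
  have hlpq : lpqNorm d p q c = Sp ^ (1/p) := rfl
  have hexp : (p/q) * (1/p) = 1/q := by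
    field_simp
  have hqq : q * (1/q) = 1 := by field_simp
  have hone : ∀ x : ℝ≥0∞, (x ^ (p/q)) ^ (1/p) = x ^ (1/q) := by
    intro x
    rw [← ENNReal.rpow_mul, hexp]
  have h1M : (1:ℝ≥0∞) ≤ ((auxM R).card : ℝ≥0∞) := by
    exact_mod_cast Nat.one_le_cast.mpr (auxM_nonempty R hR0).card_pos
  have h1M2 : (1:ℝ≥0∞) ≤ ((auxM2 d R).card : ℝ≥0∞) := by
    have hne : (auxM2 d R).Nonempty :=
      ⟨fun _ => 0, Fintype.mem_piFinset.mpr fun i => auxM_zero_mem R hR0⟩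
    exact_mod_cast Nat.one_le_cast.mpr hne.card_pos
  have hinvq : 1/q ≤ 1 := by rw [div_le_one hq0]; exact hq
  have hinvp : 1/p ≤ 1 := by rw [div_le_one hp0]; exact hp
  have hrle : ∀ x : ℝ≥0∞, 1 ≤ x → ∀ t : ℝ, t ≤ 1 → x ^ t ≤ x := by
    intro x hx t ht
    calc x ^ t ≤ x ^ (1:ℝ) := ENNReal.rpow_le_rpow_of_exponent_le hx ht
      _ = x := ENNReal.rpow_one x
  have hD0r : D0 ^ (1/q) = A * (S.card : ℝ≥0∞) := by
    rw [hD0def, ENNReal.mul_rpow_of_nonneg (A ^ q) (((S.card : ℝ≥0∞)) ^ q)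
        (by positivity : (0:ℝ) ≤ 1/q),
      ← ENNReal.rpow_mul A, ← ENNReal.rpow_mul ((S.card : ℝ≥0∞)), hqq,
      ENNReal.rpow_one, ENNReal.rpow_one]
  have hD1split : D1 ^ (1/p) = (A * (S.card : ℝ≥0∞)) * ((auxM2 d R).card : ℝ≥0∞) ^ (1/q) *
      ((auxM R).card : ℝ≥0∞) ^ (1/q) := by
    calc D1 ^ (1/p)
        = ((D0 * ((auxM2 d R).card : ℝ≥0∞)) ^ (p/q)) ^ (1/p) *
            (((auxM R).card : ℝ≥0∞) ^ (p/q)) ^ (1/p) := by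
          rw [hD1def, ENNReal.mul_rpow_of_nonneg ((D0 * ((auxM2 d R).card : ℝ≥0∞)) ^ (p/q))
            (((auxM R).card : ℝ≥0∞) ^ (p/q)) (by positivity : (0:ℝ) ≤ 1/p)]
      _ = (D0 * ((auxM2 d R).card : ℝ≥0∞)) ^ (1/q) * ((auxM R).card : ℝ≥0∞) ^ (1/q) := by
          rw [hone (D0 * ((auxM2 d R).card : ℝ≥0∞)), hone ((auxM R).card : ℝ≥0∞)]
      _ = (D0 ^ (1/q) * ((auxM2 d R).card : ℝ≥0∞) ^ (1/q)) * ((auxM R).card : ℝ≥0∞) ^ (1/q) := by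
          rw [ENNReal.mul_rpow_of_nonneg D0 (((auxM2 d R).card : ℝ≥0∞))
            (by positivity : (0:ℝ) ≤ 1/q)]
      _ = (A * (S.card : ℝ≥0∞)) * ((auxM2 d R).card : ℝ≥0∞) ^ (1/q) *
            ((auxM R).card : ℝ≥0∞) ^ (1/q) := by rw [hD0r]
  calc LpqNorm d p q (QX xs ys β (genFun φ c))
      ≤ (D1 * (((auxM R).card : ℝ≥0∞) * Sp)) ^ (1/p) := hfinal
    _ = D1 ^ (1/p) * (((auxM R).card : ℝ≥0∞) ^ (1/p) * Sp ^ (1/p)) := by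
        rw [ENNReal.mul_rpow_of_nonneg D1 (((auxM R).card : ℝ≥0∞) * Sp)
            (by positivity : (0:ℝ) ≤ 1/p),
          ENNReal.mul_rpow_of_nonneg (((auxM R).card : ℝ≥0∞)) Sp
            (by positivity : (0:ℝ) ≤ 1/p)]
    _ = (D1 ^ (1/p) * ((auxM R).card : ℝ≥0∞) ^ (1/p)) * Sp ^ (1/p) := by ring
    _ ≤ auxKB d R A₀ * Sp ^ (1/p) := by
        refine mul_le_mul_left ?_ _
        rw [hD1split, auxKB]
        have e1 : ((auxM2 d R).card : ℝ≥0∞) ^ (1/q) ≤ ((auxM2 d R).card : ℝ≥0∞) :=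
          hrle _ h1M2 _ hinvq
        have e2 : ((auxM R).card : ℝ≥0∞) ^ (1/q) ≤ ((auxM R).card : ℝ≥0∞) :=
          hrle _ h1M _ hinvq
        have e3 : ((auxM R).card : ℝ≥0∞) ^ (1/p) ≤ ((auxM R).card : ℝ≥0∞) :=
          hrle _ h1M _ hinvp
        calc A * (S.card : ℝ≥0∞) * ((auxM2 d R).card : ℝ≥0∞) ^ (1/q) *
              ((auxM R).card : ℝ≥0∞) ^ (1/q) * ((auxM R).card : ℝ≥0∞) ^ (1/p)
            ≤ A * (S.card : ℝ≥0∞) * ((auxM2 d R).card : ℝ≥0∞) *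
              ((auxM R).card : ℝ≥0∞) * ((auxM R).card : ℝ≥0∞) :=
              mul_le_mul' (mul_le_mul' (mul_le_mul' le_rfl e1) e2) e3
          _ = ENNReal.ofReal A₀ * ((auxM R ×ˢ auxM2 d R).card : ℝ≥0∞) *
              ((auxM2 d R).card : ℝ≥0∞) * ((auxM R).card : ℝ≥0∞) *
              ((auxM R).card : ℝ≥0∞) := by rw [hAdef, hSdef]
    _ = auxKB d R A₀ * lpqNorm d p q c := by rw [hlpq]

/-- For `φ ∈ W₀(L^{1,1})` continuous with compact support, there exist `C > 0` and
`γ₀ > 0` such that for every `γ ≤ γ₀`, every `γ`-dense set `X` with bounded uniform partition of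
unity, every `1 ≤ p,q < ∞` and every `c ∈ ℓ^{p,q}`, the quasi-interpolant of
`f = ∑ c_k φ(·-k)` satisfies `‖Q_X f‖_{L^{p,q}} ≤ C ‖c‖_{ℓ^{p,q}} ‖φ‖_{W(L^{1,1})}`. -/
theorem statement6 (d : ℕ) (φ : Dom d → ℂ) (hφc : Continuous φ) (hφs : HasCompactSupport φ)
    (hφW : WNorm d φ < ⊤) :
    ∃ C > (0 : ℝ), ∃ γ₀ > (0 : ℝ), ∀ γ : ℝ, 0 < γ → γ ≤ γ₀ →
      ∀ (J : Type) [Countable J], ∀ (xs : J → ℝ) (ys : J → Fin d → ℝ)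
        (β : J → J → Dom d → ℝ),
        IsGammaDense xs ys γ → IsBUPU xs ys γ β →
        ∀ p q : ℝ, 1 ≤ p → 1 ≤ q →
        ∀ c : ℤ × (Fin d → ℤ) → ℂ, lpqNorm d p q c < ⊤ →
          LpqNorm d p q (QX xs ys β (genFun φ c)) ≤
            ENNReal.ofReal C * lpqNorm d p q c * WNorm d φ := by
  classical
  obtain ⟨R₀, hR₀⟩ := (IsCompact.isBounded hφs).subset_closedBall 0
  obtain ⟨A₀, hA₀⟩ := hφc.bounded_above_of_compact_support hφs
  set R : ℝ := max R₀ 0 with hRdef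
  have hR0 : 0 ≤ R := le_max_right _ _
  have hsupp : ∀ u : Dom d, φ u ≠ 0 → |u.1| ≤ R ∧ ∀ i, |u.2 i| ≤ R := by
    intro u hu
    have hmem : u ∈ Metric.closedBall (0 : Dom d) R₀ :=
      hR₀ (subset_tsupport φ (by simpa [Function.mem_support] using hu))
    have hnorm : ‖u‖ ≤ R := by
      have h := Metric.mem_closedBall.mp hmem
      rw [dist_zero_right] at h
      exact h.trans (le_max_left _ _)
    refine ⟨?_, fun i => ?_⟩
    · calc |u.1| = ‖u.1‖ := (Real.norm_eq_abs _).symm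
        _ ≤ ‖u‖ := norm_fst_le u
        _ ≤ R := hnorm
    · calc |u.2 i| = ‖u.2 i‖ := (Real.norm_eq_abs _).symm
        _ ≤ ‖u.2‖ := norm_le_pi_norm u.2 i
        _ ≤ ‖u‖ := norm_snd_le u
        _ ≤ R := hnorm
  set B : ℝ≥0∞ := auxKB d R A₀ with hBdef
  have hBtop : B ≠ ⊤ := auxKB_ne_top d R A₀
  set C : ℝ := B.toReal / (WNorm d φ).toReal + 1 with hCdef
  have hC0 : 0 < C := by
    have h1 : 0 ≤ B.toReal / (WNorm d φ).toReal :=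
      div_nonneg ENNReal.toReal_nonneg ENNReal.toReal_nonneg
    rw [hCdef]
    linarith
  refine ⟨C, hC0, 1, one_pos, ?_⟩
  intro γ hγ0 hγ1 J _ xs ys β hdense hbupu p q hp hq c hc
  have hq0 : (0:ℝ) < q := lt_of_lt_of_le one_pos hq
  have hp0 : (0:ℝ) < p := lt_of_lt_of_le one_pos hp
  by_cases hφ0 : φ = 0
  · have hz : ∀ z : Dom d, QX xs ys β (genFun φ c) z = 0 := by
      intro z
      simp [QX, genFun, hφ0]
    have hzero : LpqNorm d p q (QX xs ys β (genFun φ c)) = 0 := by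
      have hin : ∀ x : ℝ, (∫⁻ y : Fin d → ℝ,
          (‖QX xs ys β (genFun φ c) (x, y)‖₊ : ℝ≥0∞) ^ q) = 0 := by
        intro x
        simp [hz, ENNReal.zero_rpow_of_pos hq0]
      have h2 : (∫⁻ x : ℝ, (∫⁻ y : Fin d → ℝ,
          (‖QX xs ys β (genFun φ c) (x, y)‖₊ : ℝ≥0∞) ^ q) ^ (p / q)) = 0 := by
        have h3 : ∀ x : ℝ, (∫⁻ y : Fin d → ℝ,
            (‖QX xs ys β (genFun φ c) (x, y)‖₊ : ℝ≥0∞) ^ q) ^ (p / q) = 0 := by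
          intro x
          rw [hin x]
          exact ENNReal.zero_rpow_of_pos (div_pos hp0 hq0)
        simp only [h3, lintegral_zero]
      rw [LpqNorm, h2]
      exact ENNReal.zero_rpow_of_pos (one_div_pos.mpr hp0)
    rw [hzero]
    exact bot_le
  · have key := key_bound d φ R A₀ hR0 hsupp hA₀ γ hγ1 J xs ys β hbupu p q hp hq c
    have hWtop : WNorm d φ ≠ ⊤ := hφW.ne
    have hWpos : 0 < WNorm d φ := by
      obtain ⟨z, hzne⟩ : ∃ z, φ z ≠ 0 := by
        by_contra h
        push_neg at h
        exact hφ0 (funext h)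
      have hx : Int.fract z.1 ∈ Set.Icc (0:ℝ) 1 :=
        ⟨Int.fract_nonneg _, (Int.fract_lt_one _).le⟩
      have hy : (fun i => Int.fract (z.2 i)) ∈ Set.Icc (0 : Fin d → ℝ) 1 := by
        constructor
        · intro i; exact Int.fract_nonneg _
        · intro i; exact (Int.fract_lt_one _).le
      have hptz : ((Int.fract z.1 + ((⌊z.1⌋ : ℤ) : ℝ)),
          ((fun i => Int.fract (z.2 i)) + fun i => ((⌊z.2 i⌋ : ℤ) : ℝ))) = z := by
        refine Prod.ext ?_ ?_
        · exact Int.fract_add_floor z.1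
        · funext i
          exact Int.fract_add_floor (z.2 i)
      have hchain : (‖φ z‖₊ : ℝ≥0∞) ≤ WNorm d φ := by
        calc (‖φ z‖₊ : ℝ≥0∞)
            = ‖φ (Int.fract z.1 + ((⌊z.1⌋ : ℤ) : ℝ),
                (fun i => Int.fract (z.2 i)) + fun i => ((⌊z.2 i⌋ : ℤ) : ℝ))‖₊ := by
              rw [hptz]
          _ ≤ ⨆ y ∈ Set.Icc (0 : Fin d → ℝ) 1,
                (‖φ (Int.fract z.1 + ((⌊z.1⌋ : ℤ) : ℝ),
                  y + fun i => ((⌊z.2 i⌋ : ℤ) : ℝ))‖₊ : ℝ≥0∞) :=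
              le_biSup (f := fun y : Fin d → ℝ =>
                (‖φ (Int.fract z.1 + ((⌊z.1⌋ : ℤ) : ℝ),
                  y + fun i => ((⌊z.2 i⌋ : ℤ) : ℝ))‖₊ : ℝ≥0∞)) hy
          _ ≤ ∑' l : Fin d → ℤ, ⨆ y ∈ Set.Icc (0 : Fin d → ℝ) 1,
                (‖φ (Int.fract z.1 + ((⌊z.1⌋ : ℤ) : ℝ),
                  y + fun i => ((l i : ℤ) : ℝ))‖₊ : ℝ≥0∞) :=
              ENNReal.le_tsum _
          _ ≤ ⨆ x ∈ Set.Icc (0:ℝ) 1, ∑' l : Fin d → ℤ,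
                ⨆ y ∈ Set.Icc (0 : Fin d → ℝ) 1,
                (‖φ (x + ((⌊z.1⌋ : ℤ) : ℝ), y + fun i => ((l i : ℤ) : ℝ))‖₊ : ℝ≥0∞) :=
              le_biSup (f := fun x : ℝ => ∑' l : Fin d → ℤ,
                ⨆ y ∈ Set.Icc (0 : Fin d → ℝ) 1,
                (‖φ (x + ((⌊z.1⌋ : ℤ) : ℝ), y + fun i => ((l i : ℤ) : ℝ))‖₊ : ℝ≥0∞)) hx
          _ ≤ WNorm d φ := by
              rw [WNorm]
              exact ENNReal.le_tsum _
      refine lt_of_lt_of_le ?_ hchain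
      exact ENNReal.coe_pos.mpr (nnnorm_pos.mpr hzne)
    refine key.trans ?_
    have hCW : B ≤ ENNReal.ofReal C * WNorm d φ := by
      have h1 : ENNReal.ofReal (B.toReal / (WNorm d φ).toReal) = B / WNorm d φ := by
        rw [ENNReal.ofReal_div_of_pos (ENNReal.toReal_pos hWpos.ne' hWtop),
          ENNReal.ofReal_toReal hBtop, ENNReal.ofReal_toReal hWtop]
      calc B = B / WNorm d φ * WNorm d φ := (ENNReal.div_mul_cancel hWpos.ne' hWtop).symm
        _ ≤ ENNReal.ofReal C * WNorm d φ := by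
            refine mul_le_mul_left ?_ _
            rw [← h1, hCdef]
            exact ENNReal.ofReal_le_ofReal (le_add_of_nonneg_right zero_le_one)
    calc B * lpqNorm d p q c ≤ (ENNReal.ofReal C * WNorm d φ) * lpqNorm d p q c :=
          mul_le_mul_left hCW _
      _ = ENNReal.ofReal C * lpqNorm d p q c * WNorm d φ := by ring
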